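/- Let y in R^d and x be jointly distributed random variables, with y square-integrable, E[y|x] = 0 almost surely, and conditional second moment S(x) = E[yy^T | x] positive definite almost surely. Then the functional C -> E[y^T C(x)^{-1} y + log det(C(x))], over measurable functions C mapping x to positive definite d x d matrices, is minimized by C*(x) = E[yy^T | x], and any minimizer agrees with C* almost surely. -/

import Mathlib

/-!
Conditioning on `x` turns the loss of a predictor `C` into `E[R(C(x), S(x))]` with
`R(C, S) = tr(C⁻¹ S) + log det C`, by pulling the `x`-measurable factor `C(x)⁻¹` out of
`E[yᵀ C(x)⁻¹ y | x]`. Pointwise, with `W = S^{1/2} C⁻¹ S^{1/2}`,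
`R(C, S) - R(S, S) = tr W - log det W - d = ∑ (λ - log λ - 1)` over the eigenvalues `λ > 0` of
`W`, which is nonnegative and vanishes only if `W = 1`, i.e. `C = S`.
-/

open MeasureTheory Matrix

/-- Matrices are measurable spaces, with the Borel (product) σ-algebra. -/
instance matrixMeasurableSpace {m n : Type*} : MeasurableSpace (Matrix m n ℝ) :=
  inferInstanceAs (MeasurableSpace (m → n → ℝ))

open Filter
open scoped MatrixOrder

namespace Matrix

instance {m n : Type*} [Countable m] [Countable n] : BorelSpace (Matrix m n ℝ) :=
  inferInstanceAs (BorelSpace (m → n → ℝ))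

variable {m n : Type*}

theorem measurable_entry (i : m) (j : n) : Measurable fun M : Matrix m n ℝ => M i j :=
  (measurable_pi_apply j).comp (measurable_pi_apply i)

variable [Fintype n]

theorem dotProduct_mulVec_eq_trace_mul_vecMulVec (A : Matrix n n ℝ) (v : n → ℝ) :
    v ⬝ᵥ (A *ᵥ v) = (A * vecMulVec v v).trace := by
  rw [mul_vecMulVec, trace_vecMulVec, dotProduct_comm]

variable [DecidableEq n]

theorem measurable_det : Measurable fun M : Matrix n n ℝ => M.det :=
  continuous_id.matrix_det.measurable

theorem measurable_nonsing_inv : Measurable fun M : Matrix n n ℝ => M⁻¹ := by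
  simp_rw [inv_def, Ring.inverse_eq_inv']
  exact measurable_det.inv.smul continuous_id.matrix_adjugate.measurable

variable {M C S : Matrix n n ℝ}

theorem PosDef.trace_sub_log_det_sub_card (hM : M.PosDef) :
    M.trace - Real.log M.det - Fintype.card n
      = ∑ i, (hM.1.eigenvalues i - Real.log (hM.1.eigenvalues i) - 1) := by
  simp only [hM.1.trace_eq_sum_eigenvalues, hM.1.det_eq_prod_eigenvalues,
    RCLike.ofReal_real_eq_id, id, Real.log_prod fun i _ => (hM.eigenvalues_pos i).ne',
    Finset.sum_sub_distrib]
  simp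

theorem PosDef.card_le_trace_sub_log_det (hM : M.PosDef) :
    (Fintype.card n : ℝ) ≤ M.trace - Real.log M.det := by
  have hsum := hM.trace_sub_log_det_sub_card
  have : 0 ≤ ∑ i, (hM.1.eigenvalues i - Real.log (hM.1.eigenvalues i) - 1) :=
    Finset.sum_nonneg fun i _ => by
      linarith [Real.log_le_sub_one_of_pos (hM.eigenvalues_pos i)]
  linarith

theorem PosDef.eq_one_of_trace_sub_log_det_eq_card (hM : M.PosDef)
    (h : M.trace - Real.log M.det = Fintype.card n) : M = 1 := by
  have hsum := hM.trace_sub_log_det_sub_card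
  rw [h, sub_self, eq_comm, Finset.sum_eq_zero_iff_of_nonneg fun i _ => by
      linarith [Real.log_le_sub_one_of_pos (hM.eigenvalues_pos i)]] at hsum
  have heig : hM.1.eigenvalues = 1 := funext fun i => by
    by_contra hne
    linarith [hsum i (Finset.mem_univ i), Real.log_lt_sub_one_of_pos (hM.eigenvalues_pos i) hne]
  rw [hM.1.spectral_theorem, heig]
  simp

theorem PosDef.sqrt_mul_sqrt (hS : S.PosDef) : CFC.sqrt S * CFC.sqrt S = S :=
  CFC.sqrt_mul_sqrt_self S hS.posSemidef.nonneg

theorem PosDef.isUnit_det_sqrt (hS : S.PosDef) : IsUnit (CFC.sqrt S).det := by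
  refine isUnit_iff_ne_zero.2 fun h => hS.det_pos.ne' ?_
  rw [← hS.sqrt_mul_sqrt, det_mul, h, zero_mul]

/-- A positive definite matrix with the trace and determinant of `C⁻¹ S`. -/
noncomputable def whiten (C S : Matrix n n ℝ) : Matrix n n ℝ := CFC.sqrt S * C⁻¹ * CFC.sqrt S

theorem PosDef.whiten (hC : C.PosDef) (hS : S.PosDef) : (whiten C S).PosDef := by
  have hR := (CFC.sqrt_nonneg S).posSemidef.isHermitian
  simpa only [Matrix.whiten, hR.eq] using hC.inv.conjTranspose_mul_mul_same
    (mulVec_injective_iff_isUnit.2 ((isUnit_iff_isUnit_det _).2 hS.isUnit_det_sqrt))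

theorem trace_whiten (hS : S.PosDef) : (whiten C S).trace = (C⁻¹ * S).trace := by
  rw [whiten, trace_mul_cycle, hS.sqrt_mul_sqrt, trace_mul_comm]

theorem det_whiten (hS : S.PosDef) : (whiten C S).det = S.det / C.det := by
  have hdet := congrArg det hS.sqrt_mul_sqrt
  rw [det_mul] at hdet
  rw [whiten, det_mul, det_mul, det_nonsing_inv, Ring.inverse_eq_inv', ← hdet]
  ring

theorem eq_of_whiten_eq_one (hC : IsUnit C.det) (hS : S.PosDef) (h : whiten C S = 1) :
    C = S := by
  have hCS : C⁻¹ * S = 1 := by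
    rw [← hS.sqrt_mul_sqrt, ← Matrix.mul_assoc, mul_eq_one_comm, ← Matrix.mul_assoc]
    exact h
  calc C = C * (C⁻¹ * S) := by rw [hCS, Matrix.mul_one]
    _ = S := mul_nonsing_inv_cancel_left C S hC

end Matrix

section GaussianRisk

variable {n : Type*} [Fintype n] [DecidableEq n] {C S : Matrix n n ℝ}

/-- `E[yᵀ C⁻¹ y] + log det C` when `E[y yᵀ] = S`: the expected Gaussian negative
log-likelihood of the covariance `C`, up to constants. -/
noncomputable def gaussianRisk (C S : Matrix n n ℝ) : ℝ := (C⁻¹ * S).trace + Real.log C.det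

theorem gaussianRisk_self (hS : S.PosDef) :
    gaussianRisk S S = Fintype.card n + Real.log S.det := by
  rw [gaussianRisk, nonsing_inv_mul _ hS.det_pos.ne'.isUnit, trace_one]

theorem gaussianRisk_sub_gaussianRisk_self (hC : C.PosDef) (hS : S.PosDef) :
    gaussianRisk C S - gaussianRisk S S
      = (whiten C S).trace - Real.log (whiten C S).det - Fintype.card n := by
  rw [gaussianRisk_self hS, gaussianRisk, trace_whiten hS, det_whiten hS,
    Real.log_div hS.det_pos.ne' hC.det_pos.ne']
  ring

theorem gaussianRisk_self_le (hC : C.PosDef) (hS : S.PosDef) :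
    gaussianRisk S S ≤ gaussianRisk C S := by
  linarith [gaussianRisk_sub_gaussianRisk_self hC hS,
    (hC.whiten hS).card_le_trace_sub_log_det]

theorem eq_of_gaussianRisk_eq (hC : C.PosDef) (hS : S.PosDef)
    (h : gaussianRisk C S = gaussianRisk S S) : C = S :=
  eq_of_whiten_eq_one hC.det_pos.ne'.isUnit hS
    ((hC.whiten hS).eq_one_of_trace_sub_log_det_eq_card
      (by linarith [gaussianRisk_sub_gaussianRisk_self hC hS]))

end GaussianRisk

namespace MeasureTheory

variable {Ω : Type*} {m m₀ : MeasurableSpace Ω} {μ : Measure Ω}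

theorem condExp_ae_eq_of_forall_indicator {f g : Ω → ℝ} (hf : Integrable f μ)
    {E : ℕ → Set Ω} (hE : ∀ k, MeasurableSet[m] (E k)) (hcover : ∀ ω, ∃ k, ω ∈ E k)
    (h : ∀ k, μ[(E k).indicator f | m] =ᵐ[μ] (E k).indicator g) : μ[f | m] =ᵐ[μ] g := by
  have hloc : ∀ᵐ ω ∂μ, ∀ k, (E k).indicator (μ[f | m]) ω = (E k).indicator g ω :=
    ae_all_iff.2 fun k => (condExp_indicator hf (hE k)).symm.trans (h k)
  filter_upwards [hloc] with ω hω
  obtain ⟨k, hk⟩ := hcover ω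
  simpa [Set.indicator_of_mem hk] using hω k

variable {n : Type*} [Fintype n]

theorem condExp_trace_mul_of_bound [IsFiniteMeasure μ] (hm : m ≤ m₀)
    {A P Q : Ω → Matrix n n ℝ} (hA : ∀ i j, StronglyMeasurable[m] fun ω => A ω i j)
    (c : ℝ) (hAc : ∀ ω i j, ‖A ω i j‖ ≤ c) (hP : ∀ i j, Integrable (fun ω => P ω i j) μ)
    (hQ : ∀ i j, μ[fun ω => P ω i j | m] =ᵐ[μ] fun ω => Q ω i j) :
    μ[fun ω => (A ω * P ω).trace | m] =ᵐ[μ] fun ω => (A ω * Q ω).trace := by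
  have htrace : ∀ R : Ω → Matrix n n ℝ, (fun ω => (A ω * R ω).trace)
      = ∑ p : n × n, fun ω => A ω p.1 p.2 * R ω p.2 p.1 := fun R => by
    ext ω
    simp [trace, mul_apply, Fintype.sum_prod_type]
  have hterm : ∀ p : n × n, μ[fun ω => A ω p.1 p.2 * P ω p.2 p.1 | m]
      =ᵐ[μ] fun ω => A ω p.1 p.2 * Q ω p.2 p.1 := fun ⟨i, j⟩ =>
    (condExp_stronglyMeasurable_mul_of_bound hm (hA i j) (hP j i) c
      (.of_forall fun ω => hAc ω i j)).trans ((EventuallyEq.refl _ _).mul (hQ j i))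
  rw [htrace, htrace]
  refine (condExp_finsetSum (fun ⟨i, j⟩ _ => (hP j i).bdd_mul
    ((hA i j).mono hm).aestronglyMeasurable (.of_forall fun ω => hAc ω i j)) m).trans ?_
  filter_upwards [ae_all_iff.2 hterm] with ω hω
  simp only [Finset.sum_apply, hω]

theorem condExp_trace_mul_add [IsFiniteMeasure μ] (hm : m ≤ m₀) {A P Q : Ω → Matrix n n ℝ}
    {b : Ω → ℝ} (hA : ∀ i j, StronglyMeasurable[m] fun ω => A ω i j)
    (hb : StronglyMeasurable[m] b) (hP : ∀ i j, Integrable (fun ω => P ω i j) μ)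
    (hQ : ∀ i j, μ[fun ω => P ω i j | m] =ᵐ[μ] fun ω => Q ω i j)
    (hint : Integrable (fun ω => (A ω * P ω).trace + b ω) μ) :
    μ[fun ω => (A ω * P ω).trace + b ω | m] =ᵐ[μ] fun ω => (A ω * Q ω).trace + b ω := by
  -- The summands need not be integrable separately, nor `A` bounded: localise to the
  -- `m`-measurable sets where `A` and `b` are bounded.
  set E : ℕ → Set Ω := fun k => {ω | (∀ i j, ‖A ω i j‖ ≤ k) ∧ ‖b ω‖ ≤ k}
  have hE : ∀ k, MeasurableSet[m] (E k) := fun k => by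
    simp only [E, Set.ofPred_and, Set.ofPred_forall]
    exact (MeasurableSet.iInter fun i => .iInter fun j =>
      (hA i j).norm.measurableSet_le stronglyMeasurable_const).inter
      (hb.norm.measurableSet_le stronglyMeasurable_const)
  have hcover : ∀ ω, ∃ k, ω ∈ E k := fun ω =>
    ((eventually_all.2 fun i => eventually_all.2 fun j =>
      tendsto_natCast_atTop_atTop.eventually_ge_atTop ‖A ω i j‖).and
      (tendsto_natCast_atTop_atTop.eventually_ge_atTop ‖b ω‖)).exists
  refine condExp_ae_eq_of_forall_indicator hint hE hcover fun k => ?_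
  set A' : Ω → Matrix n n ℝ := (E k).indicator A
  set b' : Ω → ℝ := (E k).indicator b
  have hind : ∀ R : Ω → Matrix n n ℝ, (E k).indicator (fun ω => (A ω * R ω).trace + b ω)
      = fun ω => (A' ω * R ω).trace + b' ω := fun R => by
    ext ω
    by_cases hω : ω ∈ E k <;> simp [A', b', hω]
  have hA' : ∀ i j, StronglyMeasurable[m] fun ω => A' ω i j := fun i j => by
    convert (hA i j).indicator (hE k) using 1
    ext ω
    by_cases hω : ω ∈ E k <;> simp [A', hω]
  have hA'c : ∀ ω i j, ‖A' ω i j‖ ≤ k := fun ω i j => by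
    by_cases hω : ω ∈ E k
    · simpa [A', hω] using hω.1 i j
    · simp [A', hω]
  have hb'm : StronglyMeasurable[m] b' := hb.indicator (hE k)
  have hb'int : Integrable b' μ := .of_bound (hb'm.mono hm).aestronglyMeasurable k
    (.of_forall fun ω => by
      by_cases hω : ω ∈ E k
      · simpa [b', hω] using hω.2
      · simp [b', hω])
  have hT : Integrable (fun ω => (A' ω * P ω).trace) μ := by
    refine ((hint.indicator (hm _ (hE k))).sub hb'int).congr (.of_forall fun ω => ?_)
    simp [hind]
  rw [hind, hind]
  refine (condExp_add hT hb'int m).trans ?_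
  rw [condExp_of_stronglyMeasurable hm hb'm hb'int]
  exact (condExp_trace_mul_of_bound hm hA' k hA'c hP hQ).add (.refl _ _)

variable [DecidableEq n]

theorem condExp_gaussianNLL_ae_eq_gaussianRisk [IsFiniteMeasure μ] (hm : m ≤ m₀)
    {y : Ω → n → ℝ} (hy : MemLp y 2 μ) {D K : Ω → Matrix n n ℝ} (hD : Measurable[m] D)
    (hK : ∀ i j, μ[fun ω => y ω i * y ω j | m] =ᵐ[μ] fun ω => K ω i j)
    (hint : Integrable (fun ω => y ω ⬝ᵥ ((D ω)⁻¹ *ᵥ y ω) + Real.log (D ω).det) μ) :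
    μ[fun ω => y ω ⬝ᵥ ((D ω)⁻¹ *ᵥ y ω) + Real.log (D ω).det | m]
      =ᵐ[μ] fun ω => gaussianRisk (D ω) (K ω) := by
  simp_rw [dotProduct_mulVec_eq_trace_mul_vecMulVec] at hint ⊢
  exact condExp_trace_mul_add hm
    (fun i j =>
      ((measurable_entry i j).comp (measurable_nonsing_inv.comp hD)).stronglyMeasurable)
    (Real.measurable_log.comp (measurable_det.comp hD)).stronglyMeasurable
    (fun i j => (hy.eval i).integrable_mul (hy.eval j)) hK hint

end MeasureTheory

theorem condCovariance_minimizes_gaussian_nll_general {Ω 𝓧 : Type*} [MeasurableSpace Ω]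
    [MeasurableSpace 𝓧] (μ : Measure Ω) [IsProbabilityMeasure μ] {d : ℕ}
    (x : Ω → 𝓧) (hx : Measurable x)
    (y : Ω → Fin d → ℝ) (hy : MemLp y 2 μ)
    (S : 𝓧 → Matrix (Fin d) (Fin d) ℝ) (hSmeas : Measurable S)
    (hS : ∀ i j, (fun ω => S (x ω) i j)
      =ᵐ[μ] μ[fun ω => y ω i * y ω j | MeasurableSpace.comap x inferInstance])
    (hSpd : ∀ᵐ ω ∂μ, (S (x ω)).PosDef)
    (hSint : Integrable (fun ω => y ω ⬝ᵥ ((S (x ω))⁻¹ *ᵥ y ω) + Real.log (S (x ω)).det) μ)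
    (C : 𝓧 → Matrix (Fin d) (Fin d) ℝ) (hCmeas : Measurable C)
    (hCpd : ∀ᵐ ω ∂μ, (C (x ω)).PosDef)
    (hCint : Integrable (fun ω => y ω ⬝ᵥ ((C (x ω))⁻¹ *ᵥ y ω) + Real.log (C (x ω)).det) μ) :
    (∫ ω, (y ω ⬝ᵥ ((S (x ω))⁻¹ *ᵥ y ω) + Real.log (S (x ω)).det) ∂μ
      ≤ ∫ ω, (y ω ⬝ᵥ ((C (x ω))⁻¹ *ᵥ y ω) + Real.log (C (x ω)).det) ∂μ) ∧
    ((∫ ω, (y ω ⬝ᵥ ((C (x ω))⁻¹ *ᵥ y ω) + Real.log (C (x ω)).det) ∂μ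
        = ∫ ω, (y ω ⬝ᵥ ((S (x ω))⁻¹ *ᵥ y ω) + Real.log (S (x ω)).det) ∂μ) →
      ∀ᵐ ω ∂μ, C (x ω) = S (x ω)) := by
  set m := MeasurableSpace.comap x inferInstance
  have hm : m ≤ _ := hx.comap_le
  have hrisk : ∀ D : 𝓧 → Matrix (Fin d) (Fin d) ℝ, Measurable D →
      Integrable (fun ω => y ω ⬝ᵥ ((D (x ω))⁻¹ *ᵥ y ω) + Real.log (D (x ω)).det) μ →
      Integrable (fun ω => gaussianRisk (D (x ω)) (S (x ω))) μ ∧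
      ∫ ω, (y ω ⬝ᵥ ((D (x ω))⁻¹ *ᵥ y ω) + Real.log (D (x ω)).det) ∂μ
        = ∫ ω, gaussianRisk (D (x ω)) (S (x ω)) ∂μ := fun D hD hint => by
    have h := condExp_gaussianNLL_ae_eq_gaussianRisk hm hy (hD.comp (comap_measurable x))
      (fun i j => (hS i j).symm) hint
    exact ⟨integrable_condExp.congr h, (integral_condExp hm).symm.trans (integral_congr_ae h)⟩
  obtain ⟨hSrisk, hSeq⟩ := hrisk S hSmeas hSint
  obtain ⟨hCrisk, hCeq⟩ := hrisk C hCmeas hCint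
  have hle : (fun ω => gaussianRisk (S (x ω)) (S (x ω)))
      ≤ᵐ[μ] fun ω => gaussianRisk (C (x ω)) (S (x ω)) := by
    filter_upwards [hSpd, hCpd] with ω hS hC using gaussianRisk_self_le hC hS
  rw [hSeq, hCeq]
  refine ⟨integral_mono_ae hSrisk hCrisk hle, fun heq => ?_⟩
  filter_upwards [(integral_eq_iff_of_ae_le hSrisk hCrisk hle).1 heq.symm, hSpd, hCpd]
    with ω h hS hC
  exact eq_of_gaussianRisk_eq hC hS h.symm

/-- **Theorem 1 of the paper.** Let `y` be square-integrable with zero conditional mean given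
`x`, and let `S(x) = E[yyᵀ|x]` be positive definite a.s. Then over measurable predictors `C(x)`
taking positive definite values (with integrable loss), the expected Gaussian negative
log-likelihood `E[yᵀ C(x)⁻¹ y + log det C(x)]` is minimized by `C = S`, and any minimizer
agrees with `S` almost surely. -/
theorem condCovariance_minimizes_gaussian_nll {Ω 𝓧 : Type*} [MeasurableSpace Ω]
    [MeasurableSpace 𝓧] (μ : Measure Ω) [IsProbabilityMeasure μ] {d : ℕ}
    (x : Ω → 𝓧) (hx : Measurable x)
    (y : Ω → Fin d → ℝ) (hy : MemLp y 2 μ)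
    (hmean : ∀ i, μ[fun ω => y ω i | MeasurableSpace.comap x inferInstance] =ᵐ[μ] 0)
    (S : 𝓧 → Matrix (Fin d) (Fin d) ℝ) (hSmeas : Measurable S)
    (hS : ∀ i j, (fun ω => S (x ω) i j)
      =ᵐ[μ] μ[fun ω => y ω i * y ω j | MeasurableSpace.comap x inferInstance])
    (hSpd : ∀ᵐ ω ∂μ, (S (x ω)).PosDef)
    (hSint : Integrable (fun ω => y ω ⬝ᵥ ((S (x ω))⁻¹ *ᵥ y ω) + Real.log (S (x ω)).det) μ)
    (C : 𝓧 → Matrix (Fin d) (Fin d) ℝ) (hCmeas : Measurable C)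
    (hCpd : ∀ᵐ ω ∂μ, (C (x ω)).PosDef)
    (hCint : Integrable (fun ω => y ω ⬝ᵥ ((C (x ω))⁻¹ *ᵥ y ω) + Real.log (C (x ω)).det) μ) :
    (∫ ω, (y ω ⬝ᵥ ((S (x ω))⁻¹ *ᵥ y ω) + Real.log (S (x ω)).det) ∂μ
      ≤ ∫ ω, (y ω ⬝ᵥ ((C (x ω))⁻¹ *ᵥ y ω) + Real.log (C (x ω)).det) ∂μ) ∧
    ((∫ ω, (y ω ⬝ᵥ ((C (x ω))⁻¹ *ᵥ y ω) + Real.log (C (x ω)).det) ∂μ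
        = ∫ ω, (y ω ⬝ᵥ ((S (x ω))⁻¹ *ᵥ y ω) + Real.log (S (x ω)).det) ∂μ) →
      ∀ᵐ ω ∂μ, C (x ω) = S (x ω)) :=
  condCovariance_minimizes_gaussian_nll_general μ x hx y hy S hSmeas hS hSpd hSint C hCmeas hCpd
    hCint
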